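/- Let h ∈ (0,1), K > 0, and let P be a Borel probability measure on ℝ^d with support contained in B̄(0,K) that is absolutely continuous with respect to Lebesgue measure with density f satisfying 0 < f_min ≤ f ≤ f_max Lebesgue-almost everywhere on its support. Then there exists a constant C, depending only on f_max, K, d and h, such that for every k ≥ 1 and every k-PDTM d_{P,h,k} of P, 0 ≤ ∫(d_{P,h,k}²(u) − d_{P,h}²(u)) dP(u) ≤ C·k^{−2/d}. -/

import Mathlib

open MeasureTheory ENNReal Set Metric

noncomputable section

/-- `d`-dimensional Euclidean space. -/
abbrev Ed (d : ℕ) : Type := EuclideanSpace ℝ (Fin d)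

variable {d : ℕ}

/-- A Borel probability measure is sub-Gaussian with variance `V²` if
`Q {‖x‖ > t} ≤ exp (−t²/(2V²))` for all `t > V`. -/
def IsSubG (Q : Measure (Ed d)) (V : ℝ) : Prop :=
  ∀ t : ℝ, V < t → Q {x : Ed d | t < ‖x‖} ≤ ENNReal.ofReal (Real.exp (-(t ^ 2) / (2 * V ^ 2)))

/-- `δ_{P,l}(x) = inf {r > 0 | P (B̄(x,r)) > l}`. -/
def dtmRadius (P : Measure (Ed d)) (l : ℝ) (x : Ed d) : ℝ :=
  sInf {r : ℝ | 0 < r ∧ ENNReal.ofReal l < P (closedBall x r)}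

/-- The distance to the measure `P` with mass parameter `h`. -/
def dtm (P : Measure (Ed d)) (h : ℝ) (x : Ed d) : ℝ :=
  Real.sqrt ((1 / h) * ∫ l in (0:ℝ)..h, (dtmRadius P l x) ^ 2)

/-- `c_{P,h}(v) = sup {c | P {y | ⟨y,v⟩ > c} > h}`. -/
def cInf (P : Measure (Ed d)) (h : ℝ) (v : Ed d) : ℝ :=
  sSup {c : ℝ | ENNReal.ofReal h < P {y : Ed d | c < (inner ℝ y v : ℝ)}}

/-- `𝒫_{x,h}(P)`: probability measures `(1/h)·Q` with `Q` a sub-measure of `P` of total mass `h`,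
coinciding with `P` on the open ball `B(x, δ_{P,h}(x))` and supported on the closed ball. -/
def PlocPt (P : Measure (Ed d)) (h : ℝ) (x : Ed d) : Set (Measure (Ed d)) :=
  {μ | ∃ Q : Measure (Ed d),
    μ = (ENNReal.ofReal h)⁻¹ • Q ∧ Q ≤ P ∧ Q Set.univ = ENNReal.ofReal h ∧
    (∀ A : Set (Ed d), A ⊆ ball x (dtmRadius P h x) → Q A = P A) ∧
    Q ((closedBall x (dtmRadius P h x))ᶜ) = 0}

/-- `𝒫_{v∞,h}(P)`: probability measures `(1/h)·Q` with `Q` a sub-measure of `P` of total mass `h`,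
coinciding with `P` on the open half-space `H(v, c_{P,h}(v))` and giving no mass to
`{y | ⟨y,v⟩ < c_{P,h}(v)}`. -/
def PlocInf (P : Measure (Ed d)) (h : ℝ) (v : Ed d) : Set (Measure (Ed d)) :=
  {μ | ∃ Q : Measure (Ed d),
    μ = (ENNReal.ofReal h)⁻¹ • Q ∧ Q ≤ P ∧ Q Set.univ = ENNReal.ofReal h ∧
    (∀ A : Set (Ed d), A ⊆ {y : Ed d | cInf P h v < (inner ℝ y v : ℝ)} → Q A = P A) ∧
    Q {y : Ed d | (inner ℝ y v : ℝ) < cInf P h v} = 0}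

/-- Mean of a measure. -/
def mMean (μ : Measure (Ed d)) : Ed d := ∫ u, u ∂μ

/-- Variance of a measure. -/
def mVar (μ : Measure (Ed d)) : ℝ := ∫ u, ‖u - mMean μ‖ ^ 2 ∂μ

/-- The set `M_h(P)` of all means of localized sub-measures of `P`. -/
def Mset (P : Measure (Ed d)) (h : ℝ) : Set (Ed d) :=
  {m | (∃ x : Ed d, ∃ μ ∈ PlocPt P h x, m = mMean μ) ∨
       (∃ v : Ed d, ‖v‖ = 1 ∧ ∃ μ ∈ PlocInf P h v, m = mMean μ)}

/-- A center is either a point of `ℝ^d` or a point at infinity `v∞` for a unit vector `v`. -/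
def ExtPt (d : ℕ) : Type := Ed d ⊕ {v : Ed d // ‖v‖ = 1}

/-- Localized measures at an extended point. -/
def PlocExt (P : Measure (Ed d)) (h : ℝ) : ExtPt d → Set (Measure (Ed d))
  | Sum.inl x => PlocPt P h x
  | Sum.inr v => PlocInf P h v.1

/-- A `k`-center for `P`: centers `t i` with localized measures `μ i ∈ 𝒫_{t i,h}(P)`. -/
def IsKCenter (P : Measure (Ed d)) (h : ℝ) (k : ℕ)
    (t : Fin k → ExtPt d) (μ : Fin k → Measure (Ed d)) : Prop :=
  ∀ i, μ i ∈ PlocExt P h (t i)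

/-- The risk of a `k`-center. -/
def risk (P : Measure (Ed d)) (k : ℕ) (μ : Fin k → Measure (Ed d)) : ℝ :=
  ∫ u, (⨅ i : Fin k, (‖u - mMean (μ i)‖ ^ 2 + mVar (μ i))) ∂P

/-- `f` is a `k`-PDTM of `P`: the square root of the power function of a risk-minimizing
`k`-center. -/
def IsKPDTM (P : Measure (Ed d)) (h : ℝ) (k : ℕ) (f : Ed d → ℝ) : Prop :=
  ∃ (t : Fin k → ExtPt d) (μ : Fin k → Measure (Ed d)),
    IsKCenter P h k t μ ∧
    (∀ (t' : Fin k → ExtPt d) (μ' : Fin k → Measure (Ed d)),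
      IsKCenter P h k t' μ' → risk P k μ ≤ risk P k μ') ∧
    ∀ x, f x = Real.sqrt (⨅ i : Fin k, (‖x - mMean (μ i)‖ ^ 2 + mVar (μ i)))

/-- `f` is an `ε`-approximate `k`-PDTM of `P`. -/
def IsEpsKPDTM (P : Measure (Ed d)) (h : ℝ) (k : ℕ) (ε : ℝ) (f : Ed d → ℝ) : Prop :=
  ∃ (t : Fin k → ExtPt d) (μ : Fin k → Measure (Ed d)),
    IsKCenter P h k t μ ∧
    (∀ (t' : Fin k → ExtPt d) (μ' : Fin k → Measure (Ed d)),
      IsKCenter P h k t' μ' → risk P k μ ≤ risk P k μ' + ε) ∧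
    ∀ x, f x = Real.sqrt (⨅ i : Fin k, (‖x - mMean (μ i)‖ ^ 2 + mVar (μ i)))

/-- `ω²_{P,h}(θ) = sup_x (d_{P,h}²(x) − ‖x−θ‖²)`, as an extended nonnegative real. -/
def omega2 (P : Measure (Ed d)) (h : ℝ) (θ : Ed d) : ℝ≥0∞ :=
  ⨆ x : Ed d, ENNReal.ofReal ((dtm P h x) ^ 2 - ‖x - θ‖ ^ 2)

/-- When `P` puts no mass on spheres, the unique element of `𝒫_{x,h}(P)`. -/
def locMeasure (P : Measure (Ed d)) (h : ℝ) (x : Ed d) : Measure (Ed d) :=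
  (ENNReal.ofReal h)⁻¹ • P.restrict (ball x (dtmRadius P h x))

/-- The `Lᵖ`-Wasserstein distance. -/
def Wdist (p : ℝ) (P Q : Measure (Ed d)) : ℝ :=
  sInf {w | ∃ π : Measure (Ed d × Ed d),
    π.map Prod.fst = P ∧ π.map Prod.snd = Q ∧
    w = (∫ y, ‖y.1 - y.2‖ ^ p ∂π) ^ (1 / p)}

/-- The support of a measure. -/
def msupport (P : Measure (Ed d)) : Set (Ed d) :=
  {x : Ed d | ∀ r : ℝ, 0 < r → 0 < P (ball x r)}

end

/-
Lower bound: for every sub-measure `ν = Q / h` of `P` (`Q ≤ P`, `Q ℝ^d = h`), the layer-cake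
formula `∫₀^h δ_{P,l}(u)² dl = 2 ∫₀^∞ (h - P(B̄(u,t)))₊ t dt` gives
`d²_{P,h}(u) ≤ ∫ ‖u - y‖² dν = ‖u - m(ν)‖² + v(ν)`, with equality for the normalized restriction
of `P` to the ball `B(u, δ_{P,h}(u))` when `P` charges no sphere. Hence every power function of
a `k`-center lies above `d²_{P,h}`.

Upper bound: compare the optimal `k`-center with the `k`-center of these localized measures at
the points `xᵢ` of a grid of mesh `ε ≤ 2√d K k^{-1/d}` covering `B̄(0,K)`. If `‖u - xᵢ‖ ≤ ε`,
the equality cases at `u` and `xᵢ`, and the lower bound at `xᵢ` for the localized measure of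
`u`, bound `‖u - m(xᵢ)‖² + v(xᵢ) - d²_{P,h}(u)` by `2 ⟪u - xᵢ, m(u) - m(xᵢ)⟫`. Moreover
`‖m(u) - m(xᵢ)‖ = O(ε)`, because the two balls differ only inside an annulus of width `4ε`,
whose `P`-mass is at most `f_max` times its volume. Integrating gives `O(ε²) = O(k^{-2/d})`.
-/

open Filter Topology
open scoped InnerProductSpace symmDiff

noncomputable section

section dtmRadius

variable {d : ℕ} {P : Measure (Ed d)} {l : ℝ} {x : Ed d}

lemma dtmRadius_nonneg (P : Measure (Ed d)) (l : ℝ) (x : Ed d) : 0 ≤ dtmRadius P l x :=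
  Real.sInf_nonneg fun _ hr => hr.1.le

lemma dtmRadius_le {r : ℝ} (hr : 0 < r) (hlr : ENNReal.ofReal l < P (closedBall x r)) :
    dtmRadius P l x ≤ r :=
  csInf_le ⟨0, fun _ hs => hs.1.le⟩ ⟨hr, hlr⟩

lemma measure_closedBall_le_of_lt_dtmRadius {r : ℝ} (hr : r < dtmRadius P l x) :
    P (closedBall x r) ≤ ENNReal.ofReal l := by
  rcases lt_or_ge r 0 with hr0 | hr0
  · simp [closedBall_eq_empty.2 hr0]
  set r' := max r (dtmRadius P l x / 2)
  have hr' : 0 < r' := lt_max_of_lt_right (by linarith)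
  calc P (closedBall x r) ≤ P (closedBall x r') :=
        measure_mono (closedBall_subset_closedBall le_sup_left)
    _ ≤ ENNReal.ofReal l := not_lt.1 fun hlr =>
        (dtmRadius_le hr' hlr).not_gt (max_lt hr (by linarith))

lemma measure_ball_dtmRadius_le : P (ball x (dtmRadius P l x)) ≤ ENNReal.ofReal l := by
  set δ := dtmRadius P l x
  have hmono : Monotone fun n : ℕ => closedBall x (δ - 1 / (n + 1)) := fun m n hmn =>
    closedBall_subset_closedBall (by gcongr)
  have hunion : ⋃ n : ℕ, closedBall x (δ - 1 / (n + 1)) = ball x δ := by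
    ext y
    simp only [mem_iUnion, mem_closedBall, mem_ball]
    constructor
    · rintro ⟨n, hn⟩
      linarith [Nat.one_div_pos_of_nat (α := ℝ) (n := n)]
    · intro hy
      obtain ⟨n, hn⟩ := exists_nat_one_div_lt (sub_pos.2 hy)
      exact ⟨n, by linarith⟩
  rw [← hunion, hmono.measure_iUnion]
  exact iSup_le fun n =>
    measure_closedBall_le_of_lt_dtmRadius (by linarith [Nat.one_div_pos_of_nat (α := ℝ) (n := n)])

variable [IsProbabilityMeasure P]

lemma exists_lt_measure_closedBall (hl : l < 1) (x : Ed d) :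
    ∃ r, 0 < r ∧ ENNReal.ofReal l < P (closedBall x r) := by
  have hlim : Tendsto (fun n : ℕ => P (closedBall x n)) atTop (𝓝 1) := by
    rw [← measure_univ (μ := P), ← iUnion_closedBall_nat x]
    exact tendsto_measure_iUnion_atTop fun m n hmn =>
      closedBall_subset_closedBall (Nat.cast_le.2 hmn)
  obtain ⟨n, hn, hn0⟩ := ((hlim.eventually (lt_mem_nhds (ENNReal.ofReal_lt_one.2 hl))).and
    (eventually_gt_atTop 0)).exists
  exact ⟨n, Nat.cast_pos.2 hn0, hn⟩

lemma lt_measure_closedBall_of_dtmRadius_lt (hl : l < 1) {r : ℝ} (hr : dtmRadius P l x < r) :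
    ENNReal.ofReal l < P (closedBall x r) := by
  obtain ⟨s, ⟨-, hs⟩, hsr⟩ :=
    (csInf_lt_iff ⟨0, fun _ hs => hs.1.le⟩ (exists_lt_measure_closedBall hl x)).1 hr
  exact hs.trans_le (measure_mono (closedBall_subset_closedBall hsr.le))

lemma le_measure_closedBall_dtmRadius (hl : l < 1) (x : Ed d) :
    ENNReal.ofReal l ≤ P (closedBall x (dtmRadius P l x)) := by
  have hright : Tendsto (fun r => P (closedBall x r)) (𝓝[>] (dtmRadius P l x))
      (𝓝 (P (closedBall x (dtmRadius P l x)))) := by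
    rw [← biInter_gt_closedBall]
    exact tendsto_measure_biInter_gt (fun _ _ => measurableSet_closedBall.nullMeasurableSet)
      (fun _ _ _ hij => closedBall_subset_closedBall hij) ⟨_, lt_add_one _, measure_ne_top P _⟩
  exact ge_of_tendsto hright (eventually_nhdsWithin_of_forall fun r hr =>
    (lt_measure_closedBall_of_dtmRadius_lt hl hr).le)

lemma dtmRadius_mono {l' : ℝ} (hl' : l' < 1) (hll' : l ≤ l') :
    dtmRadius P l x ≤ dtmRadius P l' x :=
  csInf_le_csInf ⟨0, fun _ hs => hs.1.le⟩ (exists_lt_measure_closedBall hl' x)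
    fun _ ⟨hr, hlr⟩ => ⟨hr, (ENNReal.ofReal_le_ofReal hll').trans_lt hlr⟩

lemma dtmRadius_le_add_dist (hl : l < 1) (x y : Ed d) :
    dtmRadius P l x ≤ dtmRadius P l y + dist x y := by
  refine le_of_forall_gt_imp_ge_of_dense fun r hr => ?_
  have hr' : dtmRadius P l y < r - dist x y := by linarith
  refine dtmRadius_le (by linarith [dtmRadius_nonneg P l y, dist_nonneg (x := x) (y := y)])
    ((lt_measure_closedBall_of_dtmRadius_lt hl hr').trans_le (measure_mono fun z hz => ?_))
  rw [mem_closedBall] at hz ⊢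
  linarith [dist_triangle z y x, dist_comm x y]

lemma lipschitzWith_dtmRadius (hl : l < 1) : LipschitzWith 1 (dtmRadius P l) :=
  LipschitzWith.of_le_add (dtmRadius_le_add_dist hl)

lemma dtmRadius_le_norm_add {K : ℝ} (hK : 0 < K) (hP : ∀ᵐ y ∂P, ‖y‖ ≤ K) (hl : l < 1)
    (x : Ed d) : dtmRadius P l x ≤ ‖x‖ + K := by
  refine dtmRadius_le (by positivity) ((ENNReal.ofReal_lt_one.2 hl).trans_le ?_)
  rw [← measure_univ (μ := P),
    ← (ae_mem_iff_measure_eq measurableSet_closedBall.nullMeasurableSet).1 ?_]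
  filter_upwards [hP] with y hy
  rw [mem_closedBall, dist_eq_norm]
  linarith [norm_sub_le y x]

lemma measure_ball_dtmRadius (hl : l < 1) (hsph : P (sphere x (dtmRadius P l x)) = 0) :
    P (ball x (dtmRadius P l x)) = ENNReal.ofReal l := by
  refine le_antisymm measure_ball_dtmRadius_le
    ((le_measure_closedBall_dtmRadius (P := P) hl x).trans ?_)
  calc P (closedBall x (dtmRadius P l x))
      ≤ P (ball x (dtmRadius P l x)) + P (sphere x (dtmRadius P l x)) := by
        rw [← ball_union_sphere]; exact measure_union_le _ _
    _ = P (ball x (dtmRadius P l x)) := by rw [hsph, add_zero]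

end dtmRadius

section layerCake

variable {d : ℕ} {P : Measure (Ed d)} {h : ℝ}

lemma lintegral_sq_norm_sub_eq (ν : Measure (Ed d)) (u : Ed d) :
    ∫⁻ y, ENNReal.ofReal (‖u - y‖ ^ 2) ∂ν
      = 2 * ∫⁻ t in Ioi 0, ν (closedBall u t)ᶜ * ENNReal.ofReal t := by
  have hcake := lintegral_rpow_eq_lintegral_meas_lt_mul ν (f := fun y => ‖u - y‖)
    (ae_of_all _ fun y => norm_nonneg (u - y))
    (measurable_const.sub measurable_id).norm.aemeasurable two_pos
  simp only [Real.rpow_two] at hcake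
  have hset (t : ℝ) : {y | t < ‖u - y‖} = (closedBall u t)ᶜ := by
    ext y
    simp [dist_eq_norm']
  simp only [hset] at hcake
  rw [hcake]
  norm_num

variable [IsProbabilityMeasure P]

lemma volume_setOf_lt_dtmRadius (hh : h < 1) (x : Ed d) (t : ℝ) :
    volume.restrict (Ioc 0 h) {l | t < dtmRadius P l x}
      = ENNReal.ofReal h - P (closedBall x t) := by
  set a := P.real (closedBall x t)
  have ha : 0 ≤ a := measureReal_nonneg
  have hsub : Ioc a h ⊆ {l | t < dtmRadius P l x} ∩ Ioc 0 h := by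
    rintro l ⟨hal, hlh⟩
    refine ⟨show t < _ from not_le.1 fun hδt => hal.not_ge ?_, ha.trans_lt hal, hlh⟩
    have := (le_measure_closedBall_dtmRadius (P := P) (hlh.trans_lt hh) x).trans
      (measure_mono (closedBall_subset_closedBall hδt))
    rwa [← ofReal_measureReal, ENNReal.ofReal_le_ofReal_iff ha] at this
  have hsup : {l | t < dtmRadius P l x} ∩ Ioc 0 h ⊆ Icc a h := by
    rintro l ⟨htδ, hl0, hlh⟩
    have := measure_closedBall_le_of_lt_dtmRadius htδ
    rw [← ofReal_measureReal, ENNReal.ofReal_le_ofReal_iff hl0.le] at this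
    exact ⟨this, hlh⟩
  rw [Measure.restrict_apply' measurableSet_Ioc, ← ofReal_measureReal (μ := P),
    ← ENNReal.ofReal_sub _ ha]
  refine le_antisymm ((measure_mono hsup).trans_eq Real.volume_Icc) ?_
  exact Real.volume_Ioc.symm.trans_le (measure_mono hsub)

lemma monotoneOn_dtmRadius (hh : h < 1) (x : Ed d) :
    MonotoneOn (fun l => dtmRadius P l x) (Icc 0 h) :=
  fun _ _ _ hl' hll' => dtmRadius_mono (hl'.2.trans_lt hh) hll'

lemma integrableOn_dtmRadius_sq (hh : h < 1) (x : Ed d) :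
    IntegrableOn (fun l => dtmRadius P l x ^ 2) (Ioc 0 h) :=
  (MonotoneOn.integrableOn_isCompact isCompact_Icc fun _ ha _ hb hab =>
    pow_le_pow_left₀ (dtmRadius_nonneg P _ x) (monotoneOn_dtmRadius hh x ha hb hab) 2).mono_set
    Ioc_subset_Icc_self

lemma ofReal_integral_dtmRadius_sq (hh0 : 0 ≤ h) (hh1 : h < 1) (x : Ed d) :
    ENNReal.ofReal (∫ l in 0..h, dtmRadius P l x ^ 2)
      = 2 * ∫⁻ t in Ioi 0, (ENNReal.ofReal h - P (closedBall x t)) * ENNReal.ofReal t := by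
  have hmeas : AEMeasurable (fun l => dtmRadius P l x) (volume.restrict (Ioc 0 h)) :=
    (((monotoneOn_dtmRadius hh1 x).integrableOn_isCompact isCompact_Icc).mono_set
      Ioc_subset_Icc_self).aemeasurable
  have hcake := lintegral_rpow_eq_lintegral_meas_lt_mul _ (f := fun l => dtmRadius P l x)
    (ae_of_all _ fun l => dtmRadius_nonneg P l x) hmeas two_pos
  simp only [Real.rpow_two] at hcake
  rw [intervalIntegral.integral_of_le hh0,
    ofReal_integral_eq_lintegral_ofReal (integrableOn_dtmRadius_sq hh1 x)
      (ae_of_all _ fun l => sq_nonneg _), hcake]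
  simp only [volume_setOf_lt_dtmRadius hh1 x]
  norm_num

lemma ofReal_integral_dtmRadius_sq_le (hh0 : 0 ≤ h) (hh1 : h < 1) {Q : Measure (Ed d)}
    (hQP : Q ≤ P) (hQ : Q univ = ENNReal.ofReal h) (u : Ed d) :
    ENNReal.ofReal (∫ l in 0..h, dtmRadius P l u ^ 2)
      ≤ ∫⁻ y, ENNReal.ofReal (‖u - y‖ ^ 2) ∂Q := by
  rw [ofReal_integral_dtmRadius_sq hh0 hh1, lintegral_sq_norm_sub_eq]
  gcongr with t
  rw [measure_compl measurableSet_closedBall (ne_top_of_le_ne_top (measure_ne_top P _) (hQP _)),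
    hQ]
  exact tsub_le_tsub_left (hQP _) _

lemma lintegral_restrict_ball_dtmRadius_le (hh0 : 0 ≤ h) (hh1 : h < 1) (x : Ed d) :
    ∫⁻ y, ENNReal.ofReal (‖x - y‖ ^ 2) ∂(P.restrict (ball x (dtmRadius P h x)))
      ≤ ENNReal.ofReal (∫ l in 0..h, dtmRadius P l x ^ 2) := by
  rw [ofReal_integral_dtmRadius_sq hh0 hh1, lintegral_sq_norm_sub_eq]
  gcongr with t
  rw [Measure.restrict_apply measurableSet_closedBall.compl, ← sdiff_eq_compl_inter]
  rcases lt_or_ge t (dtmRadius P h x) with ht | ht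
  · rw [measure_sdiff (closedBall_subset_ball ht) measurableSet_closedBall.nullMeasurableSet
      (measure_ne_top P _)]
    exact tsub_le_tsub_right measure_ball_dtmRadius_le _
  · rw [sdiff_eq_empty.2 (ball_subset_closedBall.trans (closedBall_subset_closedBall ht)),
      measure_empty]
    exact zero_le

lemma continuous_dtm (hh0 : 0 ≤ h) (hh1 : h < 1) : Continuous (dtm P h) := by
  refine Real.continuous_sqrt.comp
    (continuous_const.mul (continuous_iff_continuousAt.2 fun x₀ => ?_))
  refine intervalIntegral.continuousAt_of_dominated_interval
    (bound := fun _ => (dtmRadius P h x₀ + 1) ^ 2) (Eventually.of_forall fun x => ?_) ?_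
    intervalIntegrable_const (ae_of_all _ fun l hl => ?_)
  · rw [uIoc_of_le hh0]
    exact (integrableOn_dtmRadius_sq hh1 x).aestronglyMeasurable
  · filter_upwards [ball_mem_nhds x₀ one_pos] with x hx
    refine ae_of_all _ fun l hl => ?_
    rw [uIoc_of_le hh0] at hl
    rw [Real.norm_of_nonneg (sq_nonneg _)]
    refine pow_le_pow_left₀ (dtmRadius_nonneg P l x) ?_ 2
    linarith [dtmRadius_mono (P := P) (x := x) hh1 hl.2, dtmRadius_le_add_dist (P := P) hh1 x x₀,
      mem_ball.1 hx]
  · rw [uIoc_of_le hh0] at hl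
    exact ((lipschitzWith_dtmRadius (hl.2.trans_lt hh1)).continuous.pow 2).continuousAt

end layerCake

section subMeasures

variable {d : ℕ}

def subMeasures (P : Measure (Ed d)) (h : ℝ) : Set (Measure (Ed d)) :=
  {ν | ∃ Q ≤ P, Q univ = ENNReal.ofReal h ∧ ν = (ENNReal.ofReal h)⁻¹ • Q}

variable {P ν : Measure (Ed d)} {h : ℝ}

lemma plocExt_subset_subMeasures (t : ExtPt d) : PlocExt P h t ⊆ subMeasures P h := by
  rcases t with x | v <;> rintro μ ⟨Q, hμ, hQP, hQ, -, -⟩ <;> exact ⟨Q, hQP, hQ, hμ⟩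

lemma isProbabilityMeasure_of_mem_subMeasures (hh : 0 < h) (hν : ν ∈ subMeasures P h) :
    IsProbabilityMeasure ν := by
  obtain ⟨Q, -, hQ, rfl⟩ := hν
  constructor
  rw [Measure.smul_apply, hQ, smul_eq_mul,
    ENNReal.inv_mul_cancel (ENNReal.ofReal_pos.2 hh).ne' ENNReal.ofReal_ne_top]

lemma absolutelyContinuous_of_mem_subMeasures (hν : ν ∈ subMeasures P h) : ν ≪ P := by
  obtain ⟨Q, hQP, -, rfl⟩ := hν
  exact (Measure.absolutelyContinuous_of_le hQP).smul_left _

lemma locMeasure_mem_plocPt [IsProbabilityMeasure P] (hh : h < 1) (x : Ed d)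
    (hsph : P (sphere x (dtmRadius P h x)) = 0) : locMeasure P h x ∈ PlocPt P h x := by
  refine ⟨_, rfl, Measure.restrict_le_self, ?_, fun A hA => ?_, ?_⟩
  · rw [Measure.restrict_apply_univ, measure_ball_dtmRadius hh hsph]
  · rw [Measure.restrict_eq_self _ hA]
  · rw [Measure.restrict_apply' measurableSet_ball,
      (disjoint_compl_left.mono_right ball_subset_closedBall).inter_eq, measure_empty]

lemma locMeasure_mem_subMeasures [IsProbabilityMeasure P] (hh : h < 1) (x : Ed d)
    (hsph : P (sphere x (dtmRadius P h x)) = 0) : locMeasure P h x ∈ subMeasures P h :=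
  plocExt_subset_subMeasures (Sum.inl x) (locMeasure_mem_plocPt hh x hsph)

end subMeasures

section moments

variable {d : ℕ}

def powerDist (ν : Measure (Ed d)) (u : Ed d) : ℝ := ‖u - mMean ν‖ ^ 2 + mVar ν

variable {ν : Measure (Ed d)} {K : ℝ}

lemma integrable_sq_norm_sub [IsFiniteMeasure ν] (hν : ∀ᵐ y ∂ν, ‖y‖ ≤ K) (u : Ed d) :
    Integrable (fun y => ‖u - y‖ ^ 2) ν := by
  refine Integrable.mono' (integrable_const ((‖u‖ + K) ^ 2))
    ((continuous_const.sub continuous_id).norm.pow 2).aestronglyMeasurable ?_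
  filter_upwards [hν] with y hy
  rw [Real.norm_of_nonneg (sq_nonneg _)]
  exact pow_le_pow_left₀ (norm_nonneg _) ((norm_sub_le u y).trans (by linarith)) 2

lemma integral_sq_norm_sub_le [IsProbabilityMeasure ν] (hν : ∀ᵐ y ∂ν, ‖y‖ ≤ K) (u : Ed d) :
    ∫ y, ‖u - y‖ ^ 2 ∂ν ≤ (‖u‖ + K) ^ 2 := by
  calc ∫ y, ‖u - y‖ ^ 2 ∂ν ≤ ∫ _, (‖u‖ + K) ^ 2 ∂ν := by
        refine integral_mono_ae (integrable_sq_norm_sub hν u) (integrable_const _) ?_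
        filter_upwards [hν] with y hy
        exact pow_le_pow_left₀ (norm_nonneg _) ((norm_sub_le u y).trans (by linarith)) 2
    _ = (‖u‖ + K) ^ 2 := by simp

lemma integral_sq_norm_sub_eq_powerDist [IsProbabilityMeasure ν] (hν : ∀ᵐ y ∂ν, ‖y‖ ≤ K)
    (u : Ed d) : ∫ y, ‖u - y‖ ^ 2 ∂ν = powerDist ν u := by
  set m := mMean ν
  have hid : Integrable (fun y : Ed d => y) ν :=
    Integrable.mono' (integrable_const K) aestronglyMeasurable_id hν
  have hcm : Integrable (fun y => m - y) ν := (integrable_const m).sub hid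
  have hinner : Integrable (fun y => 2 * ⟪u - m, m - y⟫_ℝ) ν :=
    (hcm.const_inner (u - m)).const_mul 2
  have hsq : Integrable (fun y => ‖y - m‖ ^ 2) ν := by
    simpa only [norm_sub_rev] using integrable_sq_norm_sub hν m
  have hexpand (y : Ed d) : ‖u - y‖ ^ 2 = ‖u - m‖ ^ 2 + (2 * ⟪u - m, m - y⟫_ℝ + ‖y - m‖ ^ 2) := by
    rw [show u - y = (u - m) + (m - y) by abel, norm_add_sq_real, norm_sub_rev m y]
    ring
  have hcentered : ∫ y, ⟪u - m, m - y⟫_ℝ ∂ν = 0 := by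
    rw [integral_inner hcm, integral_sub (integrable_const m) hid, integral_const, probReal_univ,
      one_smul, show ∫ y, y ∂ν = m from rfl, sub_self, inner_zero_right]
  have hsum : Integrable (fun y => 2 * ⟪u - m, m - y⟫_ℝ + ‖y - m‖ ^ 2) ν := hinner.add hsq
  rw [integral_congr_ae (ae_of_all _ hexpand), integral_add (integrable_const _) hsum,
    integral_add hinner hsq, integral_const_mul, hcentered, integral_const, probReal_univ,
    one_smul, mul_zero, zero_add]
  rfl

end moments

section powerDist

variable {d : ℕ}

def powerFun {k : ℕ} (μ : Fin k → Measure (Ed d)) (u : Ed d) : ℝ := ⨅ i, powerDist (μ i) u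

variable {P ν : Measure (Ed d)} {h K : ℝ}

lemma sq_dtm_eq_toReal (hh : 0 < h) (x : Ed d) :
    dtm P h x ^ 2
      = ((ENNReal.ofReal h)⁻¹ * ENNReal.ofReal (∫ l in 0..h, dtmRadius P l x ^ 2)).toReal := by
  have hT : 0 ≤ ∫ l in 0..h, dtmRadius P l x ^ 2 :=
    intervalIntegral.integral_nonneg hh.le fun _ _ => sq_nonneg _
  rw [dtm, Real.sq_sqrt (mul_nonneg (one_div_nonneg.2 hh.le) hT), ENNReal.toReal_mul,
    ENNReal.toReal_inv, ENNReal.toReal_ofReal hh.le, ENNReal.toReal_ofReal hT, one_div]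

lemma powerDist_nonneg (ν : Measure (Ed d)) (u : Ed d) : 0 ≤ powerDist ν u :=
  add_nonneg (sq_nonneg _) (integral_nonneg fun _ => sq_nonneg _)

variable {k : ℕ} {μ : Fin k → Measure (Ed d)}

lemma powerFun_nonneg (μ : Fin k → Measure (Ed d)) (u : Ed d) : 0 ≤ powerFun μ u :=
  Real.iInf_nonneg fun i => powerDist_nonneg (μ i) u

lemma powerFun_le (μ : Fin k → Measure (Ed d)) (i : Fin k) (u : Ed d) :
    powerFun μ u ≤ powerDist (μ i) u :=
  ciInf_le (finite_range _).bddBelow i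

variable [IsProbabilityMeasure P]

lemma sq_dtm_le_powerDist (hh0 : 0 < h) (hh1 : h < 1) (hPK : ∀ᵐ y ∂P, ‖y‖ ≤ K)
    (hν : ν ∈ subMeasures P h) (u : Ed d) : dtm P h u ^ 2 ≤ powerDist ν u := by
  have := isProbabilityMeasure_of_mem_subMeasures hh0 hν
  have hνK := (absolutelyContinuous_of_mem_subMeasures hν).ae_le hPK
  have hint := integrable_sq_norm_sub hνK u
  rw [← integral_sq_norm_sub_eq_powerDist hνK, sq_dtm_eq_toReal hh0,
    integral_eq_lintegral_of_nonneg_ae (ae_of_all _ fun _ => sq_nonneg _) hint.1]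
  refine ENNReal.toReal_mono hint.lintegral_lt_top.ne ?_
  obtain ⟨Q, hQP, hQ, rfl⟩ := hν
  rw [lintegral_smul_measure, smul_eq_mul]
  gcongr
  exact ofReal_integral_dtmRadius_sq_le hh0.le hh1 hQP hQ u

lemma powerDist_locMeasure_le_sq_dtm (hh0 : 0 < h) (hh1 : h < 1) (hPK : ∀ᵐ y ∂P, ‖y‖ ≤ K)
    (x : Ed d) (hsph : P (sphere x (dtmRadius P h x)) = 0) :
    powerDist (locMeasure P h x) x ≤ dtm P h x ^ 2 := by
  have hloc := locMeasure_mem_subMeasures hh1 x hsph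
  have := isProbabilityMeasure_of_mem_subMeasures hh0 hloc
  rw [← integral_sq_norm_sub_eq_powerDist
      ((absolutelyContinuous_of_mem_subMeasures hloc).ae_le hPK), sq_dtm_eq_toReal hh0,
    integral_eq_lintegral_of_nonneg_ae (ae_of_all _ fun _ => sq_nonneg _) (by fun_prop),
    locMeasure, lintegral_smul_measure, smul_eq_mul]
  refine ENNReal.toReal_mono (ENNReal.mul_ne_top (ENNReal.inv_ne_top.2
    (ENNReal.ofReal_pos.2 hh0).ne') ENNReal.ofReal_ne_top) ?_
  gcongr
  exact lintegral_restrict_ball_dtmRadius_le hh0.le hh1 x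

lemma powerDist_locMeasure_sub_sq_dtm_le (hh0 : 0 < h) (hh1 : h < 1) (hPK : ∀ᵐ y ∂P, ‖y‖ ≤ K)
    (hsph : ∀ z r, P (sphere z r) = 0) (u x : Ed d) :
    powerDist (locMeasure P h x) u - dtm P h u ^ 2
      ≤ 2 * ‖u - x‖ * ‖mMean (locMeasure P h u) - mMean (locMeasure P h x)‖ := by
  set mu := mMean (locMeasure P h u)
  set mx := mMean (locMeasure P h x)
  have hx := powerDist_locMeasure_le_sq_dtm hh0 hh1 hPK x (hsph _ _)
  have hu := powerDist_locMeasure_le_sq_dtm hh0 hh1 hPK u (hsph _ _)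
  have hxu := sq_dtm_le_powerDist hh0 hh1 hPK (locMeasure_mem_subMeasures hh1 u (hsph _ _)) x
  have hpolar : ‖u - mx‖ ^ 2 - ‖x - mx‖ ^ 2 + (‖x - mu‖ ^ 2 - ‖u - mu‖ ^ 2)
      = 2 * ⟪u - x, mu - mx⟫_ℝ := by
    simp only [norm_sub_sq_real, inner_sub_left, inner_sub_right]
    ring
  have hcs : ⟪u - x, mu - mx⟫_ℝ ≤ ‖u - x‖ * ‖mu - mx‖ := real_inner_le_norm _ _
  simp only [powerDist] at hx hu hxu ⊢
  linarith

lemma sq_dtm_le_powerFun [NeZero k] (hh0 : 0 < h) (hh1 : h < 1) (hPK : ∀ᵐ y ∂P, ‖y‖ ≤ K)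
    (hμ : ∀ i, μ i ∈ subMeasures P h) (u : Ed d) : dtm P h u ^ 2 ≤ powerFun μ u :=
  le_ciInf fun i => sq_dtm_le_powerDist hh0 hh1 hPK (hμ i) u

lemma integrable_powerFun [NeZero k] (hh0 : 0 < h) (hPK : ∀ᵐ y ∂P, ‖y‖ ≤ K)
    (hμ : ∀ i, μ i ∈ subMeasures P h) : Integrable (powerFun μ) P := by
  refine Integrable.mono' (integrable_const ((2 * K) ^ 2))
    (Measurable.iInf fun i => by unfold powerDist; fun_prop).aestronglyMeasurable ?_
  filter_upwards [hPK] with u hu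
  have := isProbabilityMeasure_of_mem_subMeasures hh0 (hμ 0)
  rw [Real.norm_of_nonneg (powerFun_nonneg μ u)]
  calc powerFun μ u ≤ powerDist (μ 0) u := powerFun_le μ 0 u
    _ = ∫ y, ‖u - y‖ ^ 2 ∂(μ 0) := (integral_sq_norm_sub_eq_powerDist
        ((absolutelyContinuous_of_mem_subMeasures (hμ 0)).ae_le hPK) u).symm
    _ ≤ (‖u‖ + K) ^ 2 := integral_sq_norm_sub_le
        ((absolutelyContinuous_of_mem_subMeasures (hμ 0)).ae_le hPK) u
    _ ≤ (2 * K) ^ 2 := pow_le_pow_left₀ (by linarith [norm_nonneg u]) (by linarith) 2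

end powerDist

section meanStability

lemma norm_setIntegral_sub_setIntegral_le {α E : Type*} [MeasurableSpace α] [NormedAddCommGroup E]
    [NormedSpace ℝ E] {μ : Measure α} [IsFiniteMeasure μ] {f : α → E} (hf : Integrable f μ)
    {C : ℝ} (hC : ∀ᵐ y ∂μ, ‖f y‖ ≤ C) {A B : Set α} (hA : MeasurableSet A)
    (hB : MeasurableSet B) :
    ‖∫ y in A, f y ∂μ - ∫ y in B, f y ∂μ‖ ≤ C * μ.real (A ∆ B) := by
  rw [← integral_inter_add_sdiff hB (hf.integrableOn (s := A)),
    ← integral_inter_add_sdiff hA (hf.integrableOn (s := B)), inter_comm B A,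
    add_sub_add_left_eq_sub, measureReal_symmDiff_eq hA hB, mul_add]
  refine (norm_sub_le _ _).trans (add_le_add ?_ ?_) <;>
    exact norm_setIntegral_le_of_norm_le_const_ae (measure_lt_top _ _) (ae_restrict_of_ae hC)

lemma ball_symmDiff_ball_subset {X : Type*} [PseudoMetricSpace X] {u x : X} {r s ε : ℝ}
    (hux : dist u x ≤ ε) (hrs : |r - s| ≤ ε) :
    ball u r ∆ ball x s ⊆ closedBall u (r + 2 * ε) \ ball u (max (r - 2 * ε) 0) := by
  rw [abs_le] at hrs
  have := dist_nonneg (x := u) (y := x)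
  rintro y (⟨hyu, hyx⟩ | ⟨hyx, hyu⟩) <;>
    simp only [mem_ball, not_lt] at hyu hyx <;>
    simp only [Set.mem_sdiff, mem_closedBall, mem_ball, not_lt, max_le_iff] <;>
    refine ⟨?_, ?_, dist_nonneg⟩ <;>
    linarith [dist_triangle y u x, dist_triangle y x u, dist_comm x u]

lemma pow_sub_pow_le_of_le {a b : ℝ} (ha : 0 ≤ a) (hab : a ≤ b) (n : ℕ) :
    b ^ n - a ^ n ≤ (b - a) * n * b ^ (n - 1) := by
  have := abs_pow_sub_pow_le b a n
  rwa [abs_of_nonneg (sub_nonneg.2 (pow_le_pow_left₀ ha hab n)), abs_of_nonneg (sub_nonneg.2 hab),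
    abs_of_nonneg (ha.trans hab), abs_of_nonneg ha, max_eq_left hab] at this

lemma addHaar_real_closedBall_sdiff_ball {E : Type*} [NormedAddCommGroup E] [NormedSpace ℝ E]
    [MeasurableSpace E] [BorelSpace E] [FiniteDimensional ℝ E] [Nontrivial E] (μ : Measure E)
    [μ.IsAddHaarMeasure] (x : E) {a b : ℝ} (ha : 0 ≤ a) (hab : a ≤ b) :
    μ.real (closedBall x b \ ball x a)
      = (b ^ Module.finrank ℝ E - a ^ Module.finrank ℝ E) * μ.real (ball 0 1) := by
  rw [measureReal_sdiff (ball_subset_closedBall.trans (closedBall_subset_closedBall hab))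
    measurableSet_ball measure_closedBall_lt_top.ne,
    Measure.addHaar_real_closedBall μ x (ha.trans hab),
    ← Measure.addHaar_real_closedBall_eq_addHaar_real_ball μ x a,
    Measure.addHaar_real_closedBall μ x ha]
  ring

lemma withDensity_le_smul_of_ae_le {α : Type*} [MeasurableSpace α] {μ : Measure α}
    {g : α → ℝ≥0∞} {c : ℝ≥0∞} (hg : ∀ᵐ y ∂μ.withDensity g, g y ≤ c) :
    μ.withDensity g ≤ c • μ := by
  refine Measure.le_iff.2 fun A hA => ?_
  -- `g` need not be measurable, so the exceptional set is enlarged to a measurable null set.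
  obtain ⟨B, hBsub, hB, hB0⟩ := exists_measurable_superset_of_null (ae_iff.1 hg)
  rw [← measure_sdiff_null hB0, withDensity_apply _ (hA.diff hB), Measure.smul_apply, smul_eq_mul]
  calc ∫⁻ y in A \ B, g y ∂μ ≤ ∫⁻ _ in A \ B, c ∂μ :=
        setLIntegral_mono' (hA.diff hB) fun y hy => not_lt.1 fun hc => hy.2 (hBsub (not_le.2 hc))
    _ ≤ c * μ A := by
        rw [setLIntegral_const]
        gcongr
        exact sdiff_subset

lemma measureReal_le_mul_of_le_smul {α : Type*} [MeasurableSpace α] {μ ν : Measure α} {c : ℝ}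
    (hc : 0 ≤ c) (hμν : μ ≤ ENNReal.ofReal c • ν) {A : Set α} (hA : ν A ≠ ∞) :
    μ.real A ≤ c * ν.real A := by
  have hle : μ A ≤ ENNReal.ofReal c * ν A := by
    simpa only [Measure.smul_apply, smul_eq_mul] using Measure.le_iff'.1 hμν A
  simpa only [measureReal_def, ENNReal.toReal_mul, ENNReal.toReal_ofReal hc] using
    ENNReal.toReal_mono (ENNReal.mul_ne_top ENNReal.ofReal_ne_top hA) hle

variable {d : ℕ} {P : Measure (Ed d)} {h K : ℝ}

lemma nontrivial_Ed (hd : 0 < d) : Nontrivial (Ed d) :=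
  Module.nontrivial_of_finrank_pos (R := ℝ) (by rwa [finrank_euclideanSpace_fin])

lemma measureReal_closedBall_sdiff_ball_le (hd : 0 < d) {c : ℝ} (hc : 0 ≤ c)
    (hPc : P ≤ ENNReal.ofReal c • volume) (u : Ed d) {a b : ℝ} (ha : 0 ≤ a) (hab : a ≤ b) :
    P.real (closedBall u b \ ball u a)
      ≤ c * ((b - a) * d * b ^ (d - 1) * volume.real (ball (0 : Ed d) 1)) := by
  have := nontrivial_Ed hd
  refine (measureReal_le_mul_of_le_smul hc hPc
    ((measure_mono sdiff_subset).trans_lt measure_closedBall_lt_top).ne).trans ?_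
  rw [addHaar_real_closedBall_sdiff_ball volume u ha hab, finrank_euclideanSpace_fin]
  gcongr
  exact pow_sub_pow_le_of_le ha hab d

lemma mMean_locMeasure (hh : 0 ≤ h) (x : Ed d) :
    mMean (locMeasure P h x) = h⁻¹ • ∫ y in ball x (dtmRadius P h x), y ∂P := by
  rw [mMean, locMeasure, integral_smul_measure, ENNReal.toReal_inv, ENNReal.toReal_ofReal hh]

lemma norm_mMean_locMeasure_sub_le [IsProbabilityMeasure P] (hh : 0 < h)
    (hPK : ∀ᵐ y ∂P, ‖y‖ ≤ K) (u x : Ed d) :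
    ‖mMean (locMeasure P h u) - mMean (locMeasure P h x)‖
      ≤ K / h * P.real (ball u (dtmRadius P h u) ∆ ball x (dtmRadius P h x)) := by
  have hid : Integrable (fun y : Ed d => y) P :=
    Integrable.mono' (integrable_const K) aestronglyMeasurable_id hPK
  rw [mMean_locMeasure hh.le, mMean_locMeasure hh.le, ← smul_sub, norm_smul,
    Real.norm_of_nonneg (inv_nonneg.2 hh.le), div_eq_inv_mul, mul_assoc]
  gcongr
  exact norm_setIntegral_sub_setIntegral_le hid hPK measurableSet_ball measurableSet_ball

lemma norm_mMean_locMeasure_sub_le_mul_norm_sub [IsProbabilityMeasure P] (hd : 0 < d)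
    (hh0 : 0 < h) (hh1 : h < 1) (hK : 0 < K) (hPK : ∀ᵐ y ∂P, ‖y‖ ≤ K) {c : ℝ} (hc : 0 ≤ c)
    (hPc : P ≤ ENNReal.ofReal c • volume) {u : Ed d} (hu : ‖u‖ ≤ K) (x : Ed d) :
    ‖mMean (locMeasure P h u) - mMean (locMeasure P h x)‖
      ≤ 4 * K * c * volume.real (ball (0 : Ed d) 1) * d * (2 * K + 2 * ‖u - x‖) ^ (d - 1) / h
        * ‖u - x‖ := by
  set ε := ‖u - x‖
  set δ := dtmRadius P h u
  set a := max (δ - 2 * ε) 0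
  set b := δ + 2 * ε
  have hε : 0 ≤ ε := norm_nonneg _
  have hδ : δ ≤ 2 * K := (dtmRadius_le_norm_add hK hPK hh1 u).trans (by linarith)
  have hab : a ≤ b := max_le (by linarith) (by linarith [dtmRadius_nonneg P h u])
  have hsub : ball u δ ∆ ball x (dtmRadius P h x) ⊆ closedBall u b \ ball u a := by
    refine ball_symmDiff_ball_subset (dist_eq_norm u x).le ?_
    have := (lipschitzWith_dtmRadius (P := P) hh1).dist_le_mul u x
    rwa [Real.dist_eq, NNReal.coe_one, one_mul, dist_eq_norm] at this
  have hba : b - a ≤ 4 * ε := by linarith [le_max_left (δ - 2 * ε) 0]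
  have hb : b ≤ 2 * K + 2 * ε := by linarith
  have hann := measureReal_closedBall_sdiff_ball_le hd hc hPc u (le_max_right _ _) hab
  calc ‖mMean (locMeasure P h u) - mMean (locMeasure P h x)‖
      ≤ K / h * P.real (ball u δ ∆ ball x (dtmRadius P h x)) :=
        norm_mMean_locMeasure_sub_le hh0 hPK u x
    _ ≤ K / h * (c * ((b - a) * d * b ^ (d - 1) * volume.real (ball (0 : Ed d) 1))) := by
        gcongr
        exact (measureReal_mono hsub).trans hann
    _ ≤ K / h * (c * (4 * ε * d * (2 * K + 2 * ε) ^ (d - 1)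
          * volume.real (ball (0 : Ed d) 1))) := by
        have : 0 ≤ b - a := sub_nonneg.2 hab
        have : 0 ≤ b := (le_max_right _ _).trans hab
        gcongr
    _ = _ := by ring

end meanStability

section grid

variable {d : ℕ}

lemma exists_fin_abs_sub_le {n : ℕ} (hn : 0 < n) {t : ℝ} (ht0 : 0 ≤ t) (htn : t ≤ n) :
    ∃ j : Fin n, |t - (j + 1 / 2)| ≤ 1 / 2 := by
  rcases htn.lt_or_eq with ht | rfl
  · refine ⟨⟨⌊t⌋₊, (Nat.floor_lt ht0).2 ht⟩, abs_le.2 ⟨?_, ?_⟩⟩ <;>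
      linarith [Nat.floor_le ht0, Nat.lt_floor_add_one t]
  · refine ⟨⟨n - 1, by omega⟩, ?_⟩
    rw [Fin.val_mk, Nat.cast_sub hn, Nat.cast_one,
      show (n : ℝ) - (n - 1 + 1 / 2) = 1 / 2 by ring, abs_of_pos one_half_pos]

lemma norm_le_sqrt_mul_of_forall_abs_le {v : Ed d} {r : ℝ} (hr : 0 ≤ r)
    (hv : ∀ j, |v j| ≤ r) : ‖v‖ ≤ √d * r := by
  rw [EuclideanSpace.norm_eq, ← Real.sqrt_sq hr, ← Real.sqrt_mul (Nat.cast_nonneg d)]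
  refine Real.sqrt_le_sqrt ?_
  calc ∑ j, ‖v j‖ ^ 2 ≤ ∑ _j : Fin d, r ^ 2 := Finset.sum_le_sum fun j _ => by
        rw [Real.norm_eq_abs]
        exact pow_le_pow_left₀ (abs_nonneg _) (hv j) 2
    _ = d * r ^ 2 := by simp

lemma exists_grid_cover {n : ℕ} (hn : 0 < n) {K : ℝ} (hK : 0 < K) :
    ∃ p : (Fin d → Fin n) → Ed d, ∀ u : Ed d, ‖u‖ ≤ K → ∃ c, ‖u - p c‖ ≤ √d * K / n := by
  refine ⟨fun c => WithLp.toLp 2 fun j => K * (2 * (c j + 1 / 2) / n - 1), fun u hu => ?_⟩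
  have hn' : (0 : ℝ) < n := Nat.cast_pos.2 hn
  have hcoord (j : Fin d) : ∃ c : Fin n, |(u j + K) * n / (2 * K) - (c + 1 / 2)| ≤ 1 / 2 := by
    have huj : |u j| ≤ K := (Real.norm_eq_abs _ ▸ PiLp.norm_apply_le u j).trans hu
    rw [abs_le] at huj
    refine exists_fin_abs_sub_le hn
      (div_nonneg (mul_nonneg (by linarith) hn'.le) (by positivity)) ?_
    rw [div_le_iff₀ (by positivity)]
    nlinarith
  choose c hc using hcoord
  refine ⟨c, (norm_le_sqrt_mul_of_forall_abs_le (r := K / n) (by positivity) fun j => ?_).trans_eq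
    (by ring)⟩
  have hscale : u j - K * (2 * (c j + 1 / 2) / n - 1)
      = 2 * K / n * ((u j + K) * n / (2 * K) - (c j + 1 / 2)) := by
    field_simp
    ring
  rw [PiLp.sub_apply, PiLp.toLp_apply, hscale, abs_mul, abs_of_pos (by positivity)]
  calc 2 * K / n * |(u j + K) * n / (2 * K) - (c j + 1 / 2)| ≤ 2 * K / n * (1 / 2) := by
        gcongr
        exact hc j
    _ = K / n := by ring

lemma exists_cover_closedBall (hd : 0 < d) {K : ℝ} (hK : 0 < K) {k : ℕ} (hk : 0 < k) :
    ∃ pt : Fin k → Ed d, ∀ u : Ed d, ‖u‖ ≤ K →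
      ∃ i, ‖u - pt i‖ ≤ 2 * √d * K * (k : ℝ) ^ (-(1 : ℝ) / d) := by
  set x : ℝ := (k : ℝ) ^ (d : ℝ)⁻¹
  have hk1 : (1 : ℝ) ≤ k := Nat.one_le_cast.2 hk
  have hx1 : 1 ≤ x := Real.one_le_rpow hk1 (by positivity)
  set n := ⌊x⌋₊
  have hn : 0 < n := Nat.floor_pos.2 hx1
  have hnx : (n : ℝ) ≤ x := Nat.floor_le (by positivity)
  have hnk : n ^ d ≤ k := by
    have hxd : x ^ d = k := by
      rw [← Real.rpow_natCast, ← Real.rpow_mul (by positivity),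
        inv_mul_cancel₀ (Nat.cast_ne_zero.2 hd.ne'), Real.rpow_one]
    exact_mod_cast (pow_le_pow_left₀ (Nat.cast_nonneg n) hnx d).trans hxd.le
  have hinv : (n : ℝ)⁻¹ ≤ 2 * (k : ℝ) ^ (-(1 : ℝ) / d) := by
    have hn1 : (1 : ℝ) ≤ n := Nat.one_le_cast.2 hn
    have hx2n : x ≤ 2 * n := by linarith [Nat.lt_floor_add_one x]
    rw [neg_div, Real.rpow_neg (Nat.cast_nonneg k), one_div]
    calc (n : ℝ)⁻¹ = 2 * (2 * (n : ℝ))⁻¹ := by field_simp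
      _ ≤ 2 * x⁻¹ := by gcongr
  obtain ⟨p, hp⟩ := exists_grid_cover (d := d) hn hK
  obtain ⟨em⟩ : Nonempty ((Fin d → Fin n) ↪ Fin k) :=
    Function.Embedding.nonempty_of_card_le (by simpa [Fintype.card_fun] using hnk)
  have : Nonempty (Fin d → Fin n) := ⟨fun _ => ⟨0, hn⟩⟩
  refine ⟨p ∘ Function.invFun em, fun u hu => ?_⟩
  obtain ⟨c, hc⟩ := hp u hu
  obtain ⟨i, hi⟩ := Function.invFun_surjective em.injective c
  refine ⟨i, ?_⟩
  rw [Function.comp_apply, hi]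
  calc ‖u - p c‖ ≤ √d * K * (n : ℝ)⁻¹ := hc.trans_eq (div_eq_mul_inv _ _)
    _ ≤ √d * K * (2 * (k : ℝ) ^ (-(1 : ℝ) / d)) := by gcongr
    _ = 2 * √d * K * (k : ℝ) ^ (-(1 : ℝ) / d) := by ring

end grid

section pdtm

variable {d : ℕ} {P : Measure (Ed d)} {h K c : ℝ}

lemma measure_sphere_eq_zero_of_le_smul (hd : 0 < d) {c : ℝ≥0∞} (hPc : P ≤ c • volume)
    (z : Ed d) (r : ℝ) : P (sphere z r) = 0 :=
  have := nontrivial_Ed hd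
  Measure.absolutelyContinuous_of_le_smul hPc (Measure.addHaar_sphere volume z r)

variable [IsProbabilityMeasure P]

lemma isKCenter_locMeasure (hh : h < 1) (hsph : ∀ z r, P (sphere z r) = 0) {k : ℕ}
    (pt : Fin k → Ed d) :
    IsKCenter P h k (fun i => Sum.inl (pt i)) (fun i => locMeasure P h (pt i)) :=
  fun i => locMeasure_mem_plocPt hh (pt i) (hsph _ _)

lemma integrable_sq_dtm {k : ℕ} [NeZero k] {μ : Fin k → Measure (Ed d)} (hh0 : 0 < h)
    (hh1 : h < 1) (hPK : ∀ᵐ y ∂P, ‖y‖ ≤ K) (hμ : ∀ i, μ i ∈ subMeasures P h) :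
    Integrable (fun u => dtm P h u ^ 2) P :=
  (integrable_powerFun hh0 hPK hμ).mono' ((continuous_dtm hh0.le hh1).pow 2).aestronglyMeasurable
    (ae_of_all _ fun u => by
      rw [Real.norm_of_nonneg (sq_nonneg _)]
      exact sq_dtm_le_powerFun hh0 hh1 hPK hμ u)

lemma powerFun_locMeasure_sub_sq_dtm_le (hd : 0 < d) (hh0 : 0 < h) (hh1 : h < 1) (hK : 0 < K)
    (hPK : ∀ᵐ y ∂P, ‖y‖ ≤ K) (hc : 0 ≤ c) (hPc : P ≤ ENNReal.ofReal c • volume) {k : ℕ}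
    (pt : Fin k → Ed d) {u : Ed d} (hu : ‖u‖ ≤ K) {i : Fin k} {ε : ℝ} (hi : ‖u - pt i‖ ≤ ε) :
    powerFun (fun i => locMeasure P h (pt i)) u - dtm P h u ^ 2
      ≤ 8 * K * c * volume.real (ball (0 : Ed d) 1) * d * (2 * K + 2 * ε) ^ (d - 1) / h
        * ε ^ 2 := by
  have hsph := measure_sphere_eq_zero_of_le_smul hd hPc
  have hmean := norm_mMean_locMeasure_sub_le_mul_norm_sub hd hh0 hh1 hK hPK hc hPc hu (pt i)
  have hε : 0 ≤ ε := (norm_nonneg _).trans hi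
  calc powerFun (fun i => locMeasure P h (pt i)) u - dtm P h u ^ 2
      ≤ powerDist (locMeasure P h (pt i)) u - dtm P h u ^ 2 := by gcongr; exact powerFun_le _ i u
    _ ≤ 2 * ‖u - pt i‖ * ‖mMean (locMeasure P h u) - mMean (locMeasure P h (pt i))‖ :=
        powerDist_locMeasure_sub_sq_dtm_le hh0 hh1 hPK hsph u (pt i)
    _ ≤ 2 * ε * (4 * K * c * volume.real (ball (0 : Ed d) 1) * d * (2 * K + 2 * ε) ^ (d - 1) / h
          * ε) := by
        refine mul_le_mul (by linarith) (hmean.trans ?_) (norm_nonneg _) (by positivity)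
        gcongr
    _ = _ := by ring

lemma integral_powerFun_locMeasure_sub_le (hd : 0 < d) (hh0 : 0 < h) (hh1 : h < 1) (hK : 0 < K)
    (hPK : ∀ᵐ y ∂P, ‖y‖ ≤ K) (hc : 0 ≤ c) (hPc : P ≤ ENNReal.ofReal c • volume) {k : ℕ}
    [NeZero k] {pt : Fin k → Ed d} {ε : ℝ} (hpt : ∀ u : Ed d, ‖u‖ ≤ K → ∃ i, ‖u - pt i‖ ≤ ε) :
    ∫ u, powerFun (fun i => locMeasure P h (pt i)) u ∂P - ∫ u, dtm P h u ^ 2 ∂P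
      ≤ 8 * K * c * volume.real (ball (0 : Ed d) 1) * d * (2 * K + 2 * ε) ^ (d - 1) / h
        * ε ^ 2 := by
  have hsph := measure_sphere_eq_zero_of_le_smul hd hPc
  have hμ (i : Fin k) : locMeasure P h (pt i) ∈ subMeasures P h :=
    locMeasure_mem_subMeasures hh1 (pt i) (hsph _ _)
  have hint := integrable_powerFun hh0 hPK hμ
  have hint' := integrable_sq_dtm hh0 hh1 hPK hμ
  have hbound : ∀ᵐ u ∂P, powerFun (fun i => locMeasure P h (pt i)) u - dtm P h u ^ 2
      ≤ 8 * K * c * volume.real (ball (0 : Ed d) 1) * d * (2 * K + 2 * ε) ^ (d - 1) / h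
        * ε ^ 2 := by
    filter_upwards [hPK] with u hu
    obtain ⟨i, hi⟩ := hpt u hu
    exact powerFun_locMeasure_sub_sq_dtm_le hd hh0 hh1 hK hPK hc hPc pt hu hi
  rw [← integral_sub hint hint']
  exact (integral_mono_ae (hint.sub hint') (integrable_const _) hbound).trans (by simp)

lemma exists_isKCenter_risk_sub_le (hd : 0 < d) (hh0 : 0 < h) (hh1 : h < 1) (hK : 0 < K)
    (hPK : ∀ᵐ y ∂P, ‖y‖ ≤ K) (hc : 0 ≤ c) (hPc : P ≤ ENNReal.ofReal c • volume) {k : ℕ}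
    (hk : 0 < k) :
    ∃ (t : Fin k → ExtPt d) (μ : Fin k → Measure (Ed d)), IsKCenter P h k t μ ∧
      risk P k μ - ∫ u, dtm P h u ^ 2 ∂P
        ≤ 8 * K * c * volume.real (ball (0 : Ed d) 1) * d * (2 * K + 2 * (2 * √d * K)) ^ (d - 1)
          / h * (2 * √d * K) ^ 2 * (k : ℝ) ^ (-(2 : ℝ) / d) := by
  have : NeZero k := ⟨hk.ne'⟩
  obtain ⟨pt, hpt⟩ := exists_cover_closedBall hd hK hk
  set E := 2 * √d * K
  set κ := (k : ℝ) ^ (-(1 : ℝ) / d)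
  have hκ1 : κ ≤ 1 := Real.rpow_le_one_of_one_le_of_nonpos (Nat.one_le_cast.2 hk)
    (div_nonpos_of_nonpos_of_nonneg (by norm_num) (Nat.cast_nonneg d))
  have hκsq : κ ^ 2 = (k : ℝ) ^ (-(2 : ℝ) / d) := by
    rw [← Real.rpow_natCast, ← Real.rpow_mul (Nat.cast_nonneg k)]
    ring_nf
  refine ⟨_, _, isKCenter_locMeasure hh1 (measure_sphere_eq_zero_of_le_smul hd hPc) pt, ?_⟩
  calc risk P k (fun i => locMeasure P h (pt i)) - ∫ u, dtm P h u ^ 2 ∂P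
      ≤ 8 * K * c * volume.real (ball (0 : Ed d) 1) * d * (2 * K + 2 * (E * κ)) ^ (d - 1) / h
          * (E * κ) ^ 2 :=
        integral_powerFun_locMeasure_sub_le hd hh0 hh1 hK hPK hc hPc hpt
    _ ≤ 8 * K * c * volume.real (ball (0 : Ed d) 1) * d * (2 * K + 2 * E) ^ (d - 1) / h
          * E ^ 2 * κ ^ 2 := by
        rw [mul_pow, ← mul_assoc]
        gcongr
        exact mul_le_of_le_one_right (by positivity) hκ1
    _ = _ := by rw [hκsq]

end pdtm

end

/-- when `P` has an ambient-dimensional support with density bounded above and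
below, the `k`-PDTM approximates the DTM in `L¹(P)` at rate `k^{-2/d}`, with a constant
depending only on `f_max`, `K`, `d` and `h`. -/
theorem stmt_11 (d : ℕ) (hd : 0 < d) (h fmax K : ℝ) (hh : h ∈ Set.Ioo (0:ℝ) 1) (hK : 0 < K) :
    ∃ C : ℝ, ∀ (P : Measure (Ed d)), IsProbabilityMeasure P →
      P ((closedBall (0 : Ed d) K)ᶜ) = 0 →
      ∀ fmin : ℝ, 0 < fmin → fmin ≤ fmax →
      ∀ g : Ed d → ℝ≥0∞, P = volume.withDensity g →
      (∀ᵐ x ∂P, ENNReal.ofReal fmin ≤ g x ∧ g x ≤ ENNReal.ofReal fmax) →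
      ∀ k : ℕ, 1 ≤ k → ∀ f : Ed d → ℝ, IsKPDTM P h k f →
        0 ≤ ∫ u, (f u ^ 2 - dtm P h u ^ 2) ∂P ∧
        ∫ u, (f u ^ 2 - dtm P h u ^ 2) ∂P ≤ C * (k : ℝ) ^ (-(2 : ℝ) / d) := by
  obtain ⟨hh0, hh1⟩ := hh
  refine ⟨8 * K * fmax * volume.real (ball (0 : Ed d) 1) * d * (2 * K + 2 * (2 * √d * K)) ^ (d - 1)
    / h * (2 * √d * K) ^ 2, fun P hP hsupp fmin hfmin hfminmax g hPg hg k hk f hf => ?_⟩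
  obtain ⟨t, μ, hcen, hmin, hf⟩ := hf
  have : NeZero k := ⟨by omega⟩
  have hPK : ∀ᵐ y ∂P, ‖y‖ ≤ K :=
    (measure_eq_zero_iff_ae_notMem.1 hsupp).mono fun y hy => by simpa using hy
  have hPc : P ≤ ENNReal.ofReal fmax • volume :=
    hPg ▸ withDensity_le_smul_of_ae_le (hPg ▸ hg.mono fun _ hy => hy.2)
  have hμ (i : Fin k) : μ i ∈ subMeasures P h := plocExt_subset_subMeasures _ (hcen i)
  have hfsq (u : Ed d) : f u ^ 2 = powerFun μ u := by
    rw [hf u]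
    exact Real.sq_sqrt (powerFun_nonneg μ u)
  simp only [hfsq]
  refine ⟨integral_nonneg fun u => sub_nonneg.2 (sq_dtm_le_powerFun hh0 hh1 hPK hμ u), ?_⟩
  obtain ⟨t', μ', hcen', hrisk⟩ :=
    exists_isKCenter_risk_sub_le hd hh0 hh1 hK hPK (hfmin.le.trans hfminmax) hPc hk
  calc ∫ u, (powerFun μ u - dtm P h u ^ 2) ∂P = risk P k μ - ∫ u, dtm P h u ^ 2 ∂P :=
        integral_sub (integrable_powerFun hh0 hPK hμ) (integrable_sq_dtm hh0 hh1 hPK hμ)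
    _ ≤ risk P k μ' - ∫ u, dtm P h u ^ 2 ∂P := by gcongr; exact hmin t' μ' hcen'
    _ ≤ _ := hrisk
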